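/- Let A and S be finite non-empty subsets of an abelian group such that S is independent and every element of S has infinite order. Write n = |S|. If ∂_S(A) ≤ (1-γ)·n·|A| with a real γ ∈ (0,1], then |A| ≥ 4^{γ·n}. -/

import Mathlib

/-- The edge boundary of `A` with respect to `S`:
`∂_S(A) = |{(a,s) ∈ A × S : a + s ∉ A}|`. -/
def edgeBoundary {G : Type*} [AddCommGroup G] [DecidableEq G] (A S : Finset G) : ℕ :=
  ((A ×ˢ S).filter (fun p => p.1 + p.2 ∉ A)).card

/-- A finite subset `S` of an abelian group is independent if whenever an integral linear
combination `∑_{s ∈ S} k(s)·s` vanishes, every summand `k(s)·s` vanishes. -/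
def IsIndependent {G : Type*} [AddCommGroup G] (S : Finset G) : Prop :=
  ∀ k : G → ℤ, ∑ s ∈ S, k s • s = 0 → ∀ s ∈ S, k s • s = 0

/-!
For a map `f` and a finite set `A`, let `E_f(A) = ∑_{a ∈ A} log |A ∩ f⁻¹(f a)|`. For the quotient
map by `⟨s⟩`, each fibre is a finite piece of a line `a + ℤs`; since `s` has infinite order it
leaves `A` at some point, so there are at most `∂_s(A)` fibres, and `m log m ≥ 2 log 2 (m - 1)`
gives `E_s(A) ≥ 2 log 2 (|A| - ∂_s(A))`. Independence makes `⟨s⟩ ∩ ⟨T⟩ = 0` for `s ∉ T`, so on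
each coset of `⟨s⟩ + ⟨T⟩` a point is determined by its two smaller cosets, and a Shearer-type
count gives `E_s(A) + E_T(A) ≤ E_{s,T}(A)`. Summing over `S`,
`2 log 2 (n|A| - ∂_S(A)) ≤ E_S(A) ≤ |A| log |A|`, which under the hypothesis reads
`γ n log 4 ≤ log |A|`.
-/

open Finset Real

theorem sum_log_le_card_mul_log {ι : Type*} (s : Finset ι) {w : ι → ℝ} {N : ℝ} (hN : 0 < N)
    (hw : ∀ i ∈ s, 0 < w i) (hsum : ∑ i ∈ s, w i ≤ #s * N) :
    ∑ i ∈ s, log (w i) ≤ #s * log N := by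
  have gibbs : ∑ i ∈ s, log (w i / N) ≤ ∑ i ∈ s, (w i / N - 1) :=
    sum_le_sum fun i hi => log_le_sub_one_of_pos (div_pos (hw i hi) hN)
  have hmean : ∑ i ∈ s, (w i / N - 1) ≤ 0 := by
    rw [sum_sub_distrib, ← sum_div, sum_const, nsmul_one, sub_nonpos, div_le_iff₀ hN]
    exact hsum
  have hsplit : ∑ i ∈ s, log (w i / N) = ∑ i ∈ s, log (w i) - #s * log N := by
    rw [← nsmul_eq_mul, ← sum_const, ← sum_sub_distrib]
    exact sum_congr rfl fun i hi => log_div (hw i hi).ne' hN.ne'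
  linarith

theorem four_pow_pred_le_self_pow : ∀ n : ℕ, 4 ^ (n - 1) ≤ n ^ n
  | 0 | 1 | 2 | 3 => by norm_num
  | n + 4 => calc
      4 ^ (n + 4 - 1) ≤ 4 ^ (n + 4) := Nat.pow_le_pow_right (by norm_num) (by omega)
      _ ≤ (n + 4) ^ (n + 4) := Nat.pow_le_pow_left (by omega) _

theorem two_mul_log_two_mul_sub_one_le (n : ℕ) : 2 * log 2 * ((n : ℝ) - 1) ≤ n * log n := by
  rcases n with _ | n
  · simp [log_nonneg one_le_two]
  have hpow : (4 : ℝ) ^ n ≤ ((n + 1 : ℕ) : ℝ) ^ (n + 1) := by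
    exact_mod_cast four_pow_pred_le_self_pow (n + 1)
  have h := log_le_log (by positivity) hpow
  rw [log_pow, log_pow, show (4 : ℝ) = 2 ^ 2 by norm_num, log_pow] at h
  push_cast at h ⊢
  linarith

section FiberEntropy

variable {α β γ δ : Type*} [DecidableEq β] [DecidableEq γ] [DecidableEq δ]

/-- `#A` times the conditional entropy `H(X | f X)` (in nats) of a uniformly random `X ∈ A`. -/
noncomputable def fiberEntropy (f : α → β) (A : Finset α) : ℝ :=
  ∑ a ∈ A, log #{b ∈ A | f b = f a}

theorem card_fiber_pos {f : α → β} {A : Finset α} {a : α} (ha : a ∈ A) :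
    0 < #{b ∈ A | f b = f a} :=
  card_pos.2 ⟨a, mem_filter.2 ⟨ha, rfl⟩⟩

theorem fiberEntropy_nonneg (f : α → β) (A : Finset α) : 0 ≤ fiberEntropy f A :=
  sum_nonneg fun _ ha => log_nonneg (by exact_mod_cast card_fiber_pos ha)

theorem fiberEntropy_le (f : α → β) (A : Finset α) : fiberEntropy f A ≤ #A * log #A := by
  calc fiberEntropy f A ≤ ∑ _a ∈ A, log #A :=
        sum_le_sum fun a ha => log_le_log (by exact_mod_cast card_fiber_pos ha)
          (by exact_mod_cast card_filter_le _ _)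
    _ = #A * log #A := by rw [sum_const, nsmul_eq_mul]

theorem fiberEntropy_eq_sum_image (f : α → β) (A : Finset α) :
    fiberEntropy f A = ∑ y ∈ A.image f, (#{a ∈ A | f a = y} : ℝ) * log #{a ∈ A | f a = y} := by
  refine (sum_image' _ fun a _ => ?_).symm
  rw [sum_congr rfl fun b hb => by rw [(mem_filter.1 hb).2], sum_const, nsmul_eq_mul]

theorem two_mul_log_two_mul_sub_card_image_le (f : α → β) (A : Finset α) :
    2 * log 2 * ((#A : ℝ) - #(A.image f)) ≤ fiberEntropy f A := by
  rw [fiberEntropy_eq_sum_image, card_eq_sum_card_image f A, card_eq_sum_ones (A.image f)]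
  push_cast
  rw [← sum_sub_distrib, mul_sum]
  exact sum_le_sum fun y _ => two_mul_log_two_mul_sub_one_le _

theorem sum_card_fiber_mul_card_fiber_le {A : Finset α} (f : α → β) (g : α → γ)
    (hfg : Set.InjOn (fun a => (f a, g a)) A) :
    ∑ a ∈ A, #{b ∈ A | f b = f a} * #{c ∈ A | g c = g a} ≤ #A * #A := by
  have hdisj : (A : Set α).PairwiseDisjoint
      fun a => {b ∈ A | f b = f a} ×ˢ {c ∈ A | g c = g a} := by
    intro a ha a' ha' hne
    refine disjoint_left.2 fun ⟨b, c⟩ h h' => hne (hfg ha ha' ?_)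
    simp only [mem_product, mem_filter] at h h'
    exact Prod.ext (h.1.2.symm.trans h'.1.2) (h.2.2.symm.trans h'.2.2)
  calc ∑ a ∈ A, #{b ∈ A | f b = f a} * #{c ∈ A | g c = g a}
      = #(A.disjiUnion (fun a => {b ∈ A | f b = f a} ×ˢ {c ∈ A | g c = g a}) hdisj) := by
        simp only [card_disjiUnion, card_product]
    _ ≤ #(A ×ˢ A) := card_le_card fun p hp => by
        obtain ⟨a, -, hp⟩ := mem_disjiUnion.1 hp
        exact product_subset_product (filter_subset _ _) (filter_subset _ _) hp
    _ = #A * #A := card_product A A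

theorem fiberEntropy_add_le_of_injOn {A : Finset α} (f : α → β) (g : α → γ)
    (hfg : Set.InjOn (fun a => (f a, g a)) A) :
    fiberEntropy f A + fiberEntropy g A ≤ #A * log #A := by
  rcases A.eq_empty_or_nonempty with rfl | hA
  · simp [fiberEntropy]
  have hlog : ∀ a ∈ A, log #{b ∈ A | f b = f a} + log #{c ∈ A | g c = g a} =
      log (#{b ∈ A | f b = f a} * #{c ∈ A | g c = g a} : ℕ) := fun a ha => by
    rw [Nat.cast_mul, log_mul (by exact_mod_cast (card_fiber_pos ha).ne')
      (by exact_mod_cast (card_fiber_pos ha).ne')]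
  rw [fiberEntropy, fiberEntropy, ← sum_add_distrib, sum_congr rfl hlog]
  refine sum_log_le_card_mul_log A (by exact_mod_cast hA.card_pos)
    (fun a ha => by exact_mod_cast Nat.mul_pos (card_fiber_pos ha) (card_fiber_pos ha)) ?_
  exact_mod_cast sum_card_fiber_mul_card_fiber_le f g hfg

theorem fiberEntropy_filter_eq {A : Finset α} (f : α → β) (h : α → δ)
    (hf : ∀ a b, f a = f b → h a = h b) (y : δ) :
    fiberEntropy f {a ∈ A | h a = y} = ∑ a ∈ A with h a = y, log #{b ∈ A | f b = f a} := by
  refine sum_congr rfl fun a ha => ?_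
  rw [filter_filter]
  refine congrArg (fun n : ℕ => log n) (congrArg card (filter_congr fun b _ => ?_))
  exact ⟨And.right, fun hb => ⟨(hf b a hb).trans (mem_filter.1 ha).2, hb⟩⟩

theorem fiberEntropy_add_le {A : Finset α} (f : α → β) (g : α → γ) (h : α → δ)
    (hf : ∀ a b, f a = f b → h a = h b) (hg : ∀ a b, g a = g b → h a = h b)
    (hfg : Set.InjOn (fun a => (f a, g a)) A) :
    fiberEntropy f A + fiberEntropy g A ≤ fiberEntropy h A := by
  have hmaps : (A : Set α).MapsTo h (A.image h) := fun a ha => mem_image_of_mem h ha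
  rw [fiberEntropy, fiberEntropy, ← sum_fiberwise_of_maps_to hmaps,
    ← sum_fiberwise_of_maps_to hmaps, ← sum_add_distrib, fiberEntropy_eq_sum_image]
  refine sum_le_sum fun y _ => ?_
  rw [← fiberEntropy_filter_eq f h hf, ← fiberEntropy_filter_eq g h hg]
  exact fiberEntropy_add_le_of_injOn f g (hfg.mono (filter_subset _ _))

end FiberEntropy

theorem exists_add_notMem_of_not_isOfFinAddOrder {M : Type*} [AddLeftCancelMonoid M]
    {F : Finset M} (hF : F.Nonempty) {s : M} (hs : ¬IsOfFinAddOrder s) :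
    ∃ x ∈ F, x + s ∉ F := by
  by_contra! hclosed
  obtain ⟨a, ha⟩ := hF
  have hmem : ∀ n : ℕ, a + n • s ∈ F := fun n => by
    induction n with
    | zero => simpa using ha
    | succ n ih => simpa [succ_nsmul, add_assoc] using hclosed _ ih
  exact Set.not_infinite.2 F.finite_toSet (Set.infinite_of_injective_forall_mem
    (fun m n hmn => injective_nsmul_iff_not_isOfFinAddOrder.2 hs (add_left_cancel hmn)) hmem)

section Group

variable {G : Type*} [AddCommGroup G]

theorem IsIndependent.disjoint_zmultiples_closure {S T : Finset G} (hS : IsIndependent S)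
    {s : G} (hs : s ∈ S) (hTS : T ⊆ S) (hsT : s ∉ T) :
    Disjoint (AddSubgroup.zmultiples s) (AddSubgroup.closure (T : Set G)) := by
  classical
  refine AddSubgroup.disjoint_def.2 fun {x} hxs hxT => ?_
  obtain ⟨c, rfl⟩ := AddSubgroup.mem_zmultiples_iff.1 hxs
  rw [← Submodule.span_int_eq_addSubgroupClosure, Submodule.mem_toAddSubgroup,
    Submodule.mem_span_finset] at hxT
  obtain ⟨k, hk_supp, hk⟩ := hxT
  have hk_zero : ∀ u ∉ T, k u = 0 := fun u hu =>
    Function.notMem_support.1 fun h => hu (hk_supp h)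
  have hkS : ∑ u ∈ S, k u • u = c • s := by
    rw [← hk]
    exact (sum_subset hTS fun u _ hu => by rw [hk_zero u hu, zero_smul]).symm
  have hrel := hS (fun u => k u - if u = s then c else 0) (by
    simp only [sub_smul, sum_sub_distrib, ite_smul, zero_smul, sum_ite_eq', if_pos hs, hkS,
      sub_self]) s hs
  rwa [if_pos rfl, hk_zero s hsT, zero_sub, neg_smul, neg_eq_zero] at hrel

open scoped Classical in
theorem card_image_mk_zmultiples_le [DecidableEq G] {s : G} (hs : ¬IsOfFinAddOrder s)
    (A : Finset G) :
    #(A.image (QuotientAddGroup.mk : G → G ⧸ AddSubgroup.zmultiples s)) ≤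
      #{a ∈ A | a + s ∉ A} := by
  refine card_le_card_of_surjOn QuotientAddGroup.mk fun y hy => ?_
  obtain ⟨a, ha, rfl⟩ := mem_image.1 (mem_coe.1 hy)
  obtain ⟨x, hx, hxs⟩ := exists_add_notMem_of_not_isOfFinAddOrder
    (M := G) (F := {b ∈ A | (b : G ⧸ AddSubgroup.zmultiples s) = a})
    ⟨a, mem_filter.2 ⟨ha, rfl⟩⟩ hs
  have hx_mk : ((x + s : G) : G ⧸ AddSubgroup.zmultiples s) = x :=
    QuotientAddGroup.eq.2 (by simp [AddSubgroup.mem_zmultiples])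
  refine ⟨x, mem_filter.2 ⟨(mem_filter.1 hx).1, fun hA => hxs ?_⟩, (mem_filter.1 hx).2⟩
  exact mem_filter.2 ⟨hA, hx_mk.trans (mem_filter.1 hx).2⟩

open scoped Classical in
theorem IsIndependent.sum_fiberEntropy_zmultiples_le {S : Finset G} (hS : IsIndependent S)
    (A : Finset G) {T : Finset G} (hTS : T ⊆ S) :
    ∑ s ∈ T, fiberEntropy (QuotientAddGroup.mk : G → G ⧸ AddSubgroup.zmultiples s) A ≤
      fiberEntropy (QuotientAddGroup.mk : G → G ⧸ AddSubgroup.closure (T : Set G)) A := by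
  induction T using Finset.induction_on with
  | empty => simpa using fiberEntropy_nonneg _ A
  | @insert s T hsT ih =>
    have hsS : s ∈ S := hTS (mem_insert_self s T)
    have hTS' : T ⊆ S := (subset_insert s T).trans hTS
    have hdisj := hS.disjoint_zmultiples_closure hsS hTS' hsT
    have hsup : AddSubgroup.closure ((insert s T : Finset G) : Set G) =
        AddSubgroup.zmultiples s ⊔ AddSubgroup.closure (T : Set G) := by
      rw [coe_insert, Set.insert_eq, AddSubgroup.closure_union,
        AddSubgroup.zmultiples_eq_closure]
    rw [sum_insert hsT, hsup]
    have hadd := fiberEntropy_add_le (A := A)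
      (QuotientAddGroup.mk : G → G ⧸ AddSubgroup.zmultiples s)
      (QuotientAddGroup.mk : G → G ⧸ AddSubgroup.closure (T : Set G))
      (QuotientAddGroup.mk : G → G ⧸ (AddSubgroup.zmultiples s ⊔ AddSubgroup.closure (T : Set G)))
      ?_ ?_ ?_
    · linarith [ih hTS']
    · exact fun a b hab => QuotientAddGroup.eq.2 (le_sup_left (a := AddSubgroup.zmultiples s)
        (QuotientAddGroup.eq.1 hab))
    · exact fun a b hab => QuotientAddGroup.eq.2 (le_sup_right (a := AddSubgroup.zmultiples s)
        (QuotientAddGroup.eq.1 hab))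
    · intro a _ b _ hab
      obtain ⟨hs, hT⟩ := Prod.ext_iff.1 hab
      exact neg_add_eq_zero.1
        (AddSubgroup.disjoint_def.1 hdisj (QuotientAddGroup.eq.1 hs) (QuotientAddGroup.eq.1 hT))

theorem edgeBoundary_eq_sum [DecidableEq G] (A S : Finset G) :
    edgeBoundary A S = ∑ s ∈ S, #{a ∈ A | a + s ∉ A} := by
  rw [edgeBoundary, card_filter, sum_product, sum_comm]
  exact sum_congr rfl fun s _ => (card_filter _ _).symm

open scoped Classical in
theorem two_mul_log_two_mul_sub_edgeBoundary_le [DecidableEq G] {S : Finset G}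
    (hS : IsIndependent S) (hord : ∀ s ∈ S, ¬IsOfFinAddOrder s) (A : Finset G) :
    2 * log 2 * ((#S : ℝ) * #A - edgeBoundary A S) ≤ #A * log #A := by
  have hlog2 : 0 ≤ 2 * log 2 := by positivity
  calc 2 * log 2 * ((#S : ℝ) * #A - edgeBoundary A S)
      = ∑ s ∈ S, 2 * log 2 * ((#A : ℝ) - #{a ∈ A | a + s ∉ A}) := by
        rw [edgeBoundary_eq_sum, ← mul_sum, sum_sub_distrib, sum_const, nsmul_eq_mul]
        push_cast
        rfl
    _ ≤ ∑ s ∈ S, 2 * log 2 *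
          ((#A : ℝ) - #(A.image (QuotientAddGroup.mk : G → G ⧸ AddSubgroup.zmultiples s))) :=
        sum_le_sum fun s hs => mul_le_mul_of_nonneg_left (sub_le_sub_left
          (by exact_mod_cast card_image_mk_zmultiples_le (hord s hs) A) _) hlog2
    _ ≤ ∑ s ∈ S, fiberEntropy (QuotientAddGroup.mk : G → G ⧸ AddSubgroup.zmultiples s) A :=
        sum_le_sum fun s _ => two_mul_log_two_mul_sub_card_image_le _ A
    _ ≤ fiberEntropy (QuotientAddGroup.mk : G → G ⧸ AddSubgroup.closure (S : Set G)) A :=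
        hS.sum_fiberEntropy_zmultiples_le A subset_rfl
    _ ≤ #A * log #A := fiberEntropy_le _ A

end Group

theorem isoperimetric_general_infinite_order_general {G : Type*} [AddCommGroup G] [DecidableEq G]
    (S : Finset G) (hind : IsIndependent S)
    (hord : ∀ s ∈ S, ¬ IsOfFinAddOrder s)
    (A : Finset G) (hA : A.Nonempty)
    (γ : ℝ)
    (hbd : (edgeBoundary A S : ℝ) ≤ (1 - γ) * S.card * A.card) :
    (4 : ℝ) ^ (γ * S.card) ≤ A.card := by
  have hA_pos : (0 : ℝ) < #A := by exact_mod_cast hA.card_pos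
  have hlog4 : log 4 = 2 * log 2 := by
    rw [show (4 : ℝ) = 2 ^ 2 by norm_num, log_pow, Nat.cast_ofNat]
  have hγ : γ * #S * #A ≤ (#S : ℝ) * #A - edgeBoundary A S := by linarith
  have h : γ * #S * log 4 * #A ≤ log #A * #A := by
    calc γ * #S * log 4 * #A = 2 * log 2 * (γ * #S * #A) := by rw [hlog4]; ring
      _ ≤ 2 * log 2 * ((#S : ℝ) * #A - edgeBoundary A S) :=
        mul_le_mul_of_nonneg_left hγ (by positivity)
      _ ≤ #A * log #A := two_mul_log_two_mul_sub_edgeBoundary_le hind hord A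
      _ = log #A * #A := mul_comm _ _
  rw [rpow_le_iff_le_log (by norm_num) hA_pos]
  exact le_of_mul_le_mul_right h hA_pos

/-- **Theorem 2 (general case, infinite orders).** Let `A` and `S` be finite non-empty
subsets of an abelian group with `S` independent and all elements of `S` of infinite
order. Write `n = |S|`. If `∂_S(A) ≤ (1-γ)·n·|A|` with `γ ∈ (0,1]`, then
`|A| ≥ 4^{γ·n}`. -/
theorem isoperimetric_general_infinite_order {G : Type*} [AddCommGroup G] [DecidableEq G]
    (S : Finset G) (hS : S.Nonempty) (hind : IsIndependent S)
    (hord : ∀ s ∈ S, ¬ IsOfFinAddOrder s)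
    (A : Finset G) (hA : A.Nonempty)
    (γ : ℝ) (hγ0 : 0 < γ) (hγ1 : γ ≤ 1)
    (hbd : (edgeBoundary A S : ℝ) ≤ (1 - γ) * S.card * A.card) :
    (4 : ℝ) ^ (γ * S.card) ≤ A.card :=
  isoperimetric_general_infinite_order_general S hind hord A hA γ hbd
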